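/- Let K be a full subcategory of Top₀ closed under homeomorphisms such that K ⊄ Top₁. Then K is reflective in Top₀ if and only if K is productive and K has equalizers. -/

import Mathlib

open TopologicalSpace

/-- The b-topology associated with a topological space `(X, t)`: the topology with base
`{U ∩ cl({x}) : x ∈ U, U open}`. -/
def bTop (X : Type) (t : TopologicalSpace X) : TopologicalSpace X :=
  TopologicalSpace.generateFrom
    {s | ∃ (U : Set X) (x : X), @IsOpen X t U ∧ x ∈ U ∧ s = U ∩ @closure X t {x}}

/-- The specialization order of `(X, t)`: `x ≤ y` iff `x ∈ cl({y})`. -/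
def specLE {X : Type} (t : TopologicalSpace X) (x y : X) : Prop :=
  x ∈ @closure X t {y}

/-- The subspace topology on a subset. -/
def subTop {X : Type} (t : TopologicalSpace X) (A : Set X) : TopologicalSpace A :=
  TopologicalSpace.induced Subtype.val t

/-- A class of topological spaces, viewed as the object class of a full subcategory of Top. -/
abbrev SpaceClass : Type 1 := (X : Type) → TopologicalSpace X → Prop

/-- All members of `K` are T₀ (i.e. `K` is a subcategory of `Top₀`). -/
def AllT0 (K : SpaceClass) : Prop := ∀ X t, K X t → @T0Space X t

/-- `K` is closed under homeomorphisms. -/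
def ClosedUnderHomeo (K : SpaceClass) : Prop :=
  ∀ (X Y : Type) (tX : TopologicalSpace X) (tY : TopologicalSpace Y),
    K X tX → Nonempty (@Homeomorph X Y tX tY) → K Y tY

/-- `K ⊄ Top₁`: `K` contains a space that is not T₁. -/
def NotSubT1 (K : SpaceClass) : Prop := ∃ X t, K X t ∧ ¬ @T1Space X t

/-- `μ : X → Xk` is a K-reflection for `X`: `Xk ∈ K`, `μ` is continuous and every continuous map
from `X` to a member of `K` factors uniquely (continuously) through `μ`. -/
def IsReflection (K : SpaceClass) {X Xk : Type} (tX : TopologicalSpace X)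
    (tk : TopologicalSpace Xk) (μ : X → Xk) : Prop :=
  K Xk tk ∧ @Continuous X Xk tX tk μ ∧
    ∀ (Z : Type) (tZ : TopologicalSpace Z), K Z tZ →
      ∀ f : X → Z, @Continuous X Z tX tZ f →
        ∃! g : Xk → Z, @Continuous Xk Z tk tZ g ∧ g ∘ μ = f

/-- `K` is reflective in `Top₀`: every T₀ space admits a K-reflection. -/
def IsReflective (K : SpaceClass) : Prop :=
  ∀ (X : Type) (tX : TopologicalSpace X), @T0Space X tX →
    ∃ (Xk : Type) (tk : TopologicalSpace Xk) (μ : X → Xk), IsReflection K tX tk μ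

/-- `K` is b-closed-hereditary. -/
def BClosedHereditary (K : SpaceClass) : Prop :=
  ∀ (X : Type) (tX : TopologicalSpace X) (A : Set X),
    K X tX → @IsClosed X (bTop X tX) A → K A (subTop tX A)

/-- `K` is productive. -/
def Productive (K : SpaceClass) : Prop :=
  ∀ (I : Type) (X : I → Type) (t : ∀ i, TopologicalSpace (X i)),
    (∀ i, K (X i) (t i)) → K (∀ i, X i) (@Pi.topologicalSpace I X t)

/-- `K` has equalizers. -/
def HasEqualizers (K : SpaceClass) : Prop :=
  ∀ (X Y : Type) (tX : TopologicalSpace X) (tY : TopologicalSpace Y),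
    K X tX → K Y tY → ∀ f g : X → Y, @Continuous X Y tX tY f → @Continuous X Y tX tY g →
      K {x | f x = g x} (subTop tX {x | f x = g x})

/-- `(X, t)` is sober: T₀ and every irreducible closed set is the closure of a point. -/
def Sober (X : Type) (t : TopologicalSpace X) : Prop := @T0Space X t ∧ @QuasiSober X t

/-!
A non-T₁ space `S ∈ K` contains a copy of the Sierpiński space, so every T₀ space `Z` injects
continuously into the power `S ^ C(Z, S)`. Given `X`, let `e : X → P = S ^ C(X, S)` be the
evaluation. Products and equalizers make the intersection of all `K`-subobjects of `P` (continuous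
injections out of members of `K`) through which `e` factors again such a subobject, and this least
one is the reflection of `X`. A map from `X` into `Z ∈ K` extends to it through the pullback of
`Z ↪ S ^ C(Z, S)`, uniquely because the equalizer of two extensions is again a subobject through
which `e` factors. Conversely, a product or an equalizer of members of `K` is a retract of its
reflection, hence homeomorphic to it.
-/

open Function

variable {K : SpaceClass}

section Reflection

variable {X Xk : Type} [tX : TopologicalSpace X] [tk : TopologicalSpace Xk] {μ : X → Xk}

lemma IsReflection.ext (hμ : IsReflection K tX tk μ) {Z : Type} [tZ : TopologicalSpace Z]
    (hZ : K Z tZ) {g₁ g₂ : Xk → Z} (hg₁ : Continuous g₁) (hg₂ : Continuous g₂)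
    (h : g₁ ∘ μ = g₂ ∘ μ) : g₁ = g₂ :=
  (hμ.2.2 Z tZ hZ (g₂ ∘ μ) (hg₂.comp hμ.2.1)).unique ⟨hg₁, h⟩ ⟨hg₂, rfl⟩

lemma IsReflection.mem_of_leftInverse (hHomeo : ClosedUnderHomeo K)
    (hμ : IsReflection K tX tk μ) {r : Xk → X} (hr : Continuous r) (hrμ : LeftInverse r μ) :
    K X tX :=
  have hμr : μ ∘ r = id :=
    hμ.ext hμ.1 (hμ.2.1.comp hr) continuous_id (funext fun x => congrArg μ (hrμ x))
  hHomeo Xk X tk tX hμ.1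
    ⟨{ toFun := r, invFun := μ, left_inv := congrFun hμr, right_inv := hrμ,
       continuous_toFun := hr, continuous_invFun := hμ.2.1 }⟩

end Reflection

lemma IsReflective.productive (hT0 : AllT0 K) (hHomeo : ClosedUnderHomeo K)
    (hR : IsReflective K) : Productive K := by
  intro I X t hX
  have : ∀ i, T0Space (X i) := fun i => hT0 _ _ (hX i)
  obtain ⟨Xk, tk, μ, hμ⟩ := hR (∀ i, X i) _ inferInstance
  choose g hg using fun i => (hμ.2.2 (X i) (t i) (hX i) _ (continuous_apply i)).exists
  exact hμ.mem_of_leftInverse hHomeo (r := fun ξ i => g i ξ) (continuous_pi fun i => (hg i).1)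
    fun p => funext fun i => congrFun (hg i).2 p

lemma IsReflective.hasEqualizers (hT0 : AllT0 K) (hHomeo : ClosedUnderHomeo K)
    (hR : IsReflective K) : HasEqualizers K := by
  intro X Y tX tY hX hY f g hf hg
  have := hT0 X tX hX
  let E : Set X := {x | f x = g x}
  obtain ⟨Ek, tk, μ, hμ⟩ := hR E _ inferInstance
  obtain ⟨j, hj, hjμ⟩ := (hμ.2.2 X tX hX Subtype.val continuous_subtype_val).exists
  have hfj : f ∘ j = g ∘ j := by
    refine hμ.ext hY (hf.comp hj) (hg.comp hj) (funext fun x => ?_)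
    change f (j (μ x)) = g (j (μ x))
    rw [show j (μ x) = x from congrFun hjμ x]
    exact x.2
  exact hμ.mem_of_leftInverse hHomeo (r := fun ξ => ⟨j ξ, congrFun hfj ξ⟩) (hj.subtype_mk _)
    fun x => Subtype.ext (congrFun hjμ x)

lemma Productive.prod (hHomeo : ClosedUnderHomeo K) (hProd : Productive K)
    {X Y : Type} [tX : TopologicalSpace X] [tY : TopologicalSpace Y] (hX : K X tX) (hY : K Y tY) :
    K (X × Y) instTopologicalSpaceProd := by
  let t : ∀ i, TopologicalSpace (![X, Y] i) := Fin.cases tX (Fin.cases tY finZeroElim)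
  exact hHomeo _ _ _ _ (hProd (Fin 2) ![X, Y] t (Fin.cases hX (Fin.cases hY finZeroElim)))
    ⟨Homeomorph.piFinTwo ![X, Y]⟩

section MonoFactorisation

variable {X P : Type} [TopologicalSpace X] [tP : TopologicalSpace P] {e : X → P}

def IsMonoFactorisation (K : SpaceClass) {M : Type} (tM : TopologicalSpace M) (e : X → P)
    (m : M → P) (μ : X → M) : Prop :=
  K M tM ∧ Continuous m ∧ Injective m ∧ Continuous μ ∧ m ∘ μ = e

def IsMinimalMonoFactorisation (K : SpaceClass) {L : Type} (tL : TopologicalSpace L) (e : X → P)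
    (m : L → P) (μ : X → L) : Prop :=
  IsMonoFactorisation K tL e m μ ∧
    ∀ (M : Type) (tM : TopologicalSpace M) (m' : M → P) (μ' : X → M),
      IsMonoFactorisation K tM e m' μ' → ∃ k : L → M, Continuous k ∧ m' ∘ k = m

/-- Up to isomorphism, mono factorisations of `e` form a set: that of subsets of `P` with a
topology. -/
lemma IsMonoFactorisation.exists_subtype (hHomeo : ClosedUnderHomeo K) {M : Type}
    {tM : TopologicalSpace M} {m : M → P} {μ : X → M} (h : IsMonoFactorisation K tM e m μ) :
    ∃ (τ : TopologicalSpace (Set.range m)) (μ' : X → Set.range m),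
      IsMonoFactorisation K τ e Subtype.val μ' ∧
        ∃ k : Set.range m → M, Continuous k ∧ m ∘ k = Subtype.val := by
  obtain ⟨hM, hm, hm_inj, hμ, hmμ⟩ := h
  let φ : M ≃ Set.range m := Equiv.ofInjective m hm_inj
  let τ : TopologicalSpace (Set.range m) := coinduced φ tM
  let ψ : M ≃ₜ Set.range m := φ.toHomeomorph fun _ => isOpen_coinduced.symm
  have hmψ : m ∘ ψ.symm = Subtype.val := funext (Equiv.apply_ofInjective_symm hm_inj)
  refine ⟨τ, ψ ∘ μ, ⟨hHomeo M _ tM τ hM ⟨ψ⟩, ?_, Subtype.val_injective,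
    ψ.continuous.comp hμ, ?_⟩, ψ.symm, ψ.symm.continuous, hmψ⟩
  · exact hmψ ▸ hm.comp ψ.symm.continuous
  · rw [← hmψ, comp_assoc, ← comp_assoc ψ.symm, ψ.symm_comp_self, id_comp, hmμ]

/-- The intersection of the `A i`, as the equalizer of two maps `(∏ i, A i) × P → P ^ I`. -/
lemma exists_monoFactorisation_forall_le (hProd : Productive K) (hHomeo : ClosedUnderHomeo K)
    (hEq : HasEqualizers K) (hP : K P tP) (he : Continuous e) {I : Type} {A : I → Set P}
    {τ : ∀ i, TopologicalSpace (A i)} {μA : ∀ i, X → A i}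
    (hA : ∀ i, IsMonoFactorisation K (τ i) e Subtype.val (μA i)) :
    ∃ (L : Type) (tL : TopologicalSpace L) (m : L → P) (μ : X → L),
      IsMonoFactorisation K tL e m μ ∧
        ∀ i, ∃ k : L → A i, Continuous k ∧ Subtype.val ∘ k = m := by
  let F : (∀ i, A i) × P → (I → P) := fun q i => q.1 i
  let G : (∀ i, A i) × P → (I → P) := fun q _ => q.2
  have hF : Continuous F :=
    continuous_pi fun i => (hA i).2.1.comp ((continuous_apply i).comp continuous_fst)
  have hG : Continuous G := continuous_pi fun _ => continuous_snd
  let L : Set ((∀ i, A i) × P) := {q | F q = G q}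
  have hL : K L _ := hEq _ _ _ _ (hProd.prod hHomeo (hProd _ _ _ fun i => (hA i).1) hP)
    (hProd I _ _ fun _ => hP) F G hF hG
  have hm_inj : Injective fun q : L => q.1.2 := by
    rintro ⟨⟨w, p⟩, hq⟩ ⟨⟨w', p'⟩, hq'⟩ (rfl : p = p')
    have hww' : w = w' :=
      funext fun i => Subtype.ext ((congrFun hq i).trans (congrFun hq' i).symm)
    subst hww'
    rfl
  refine ⟨L, _, fun q => q.1.2,
    fun x => ⟨(fun i => μA i x, e x), funext fun i => congrFun (hA i).2.2.2.2 x⟩,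
    ⟨hL, continuous_snd.comp continuous_subtype_val, hm_inj, ?_, rfl⟩,
    fun i => ⟨fun q => q.1.1 i, (continuous_apply i).comp (continuous_fst.comp
      continuous_subtype_val), funext fun q => congrFun q.2 i⟩⟩
  exact .subtype_mk (.prodMk (continuous_pi fun i => (hA i).2.2.2.1) he) _

lemma exists_isMinimalMonoFactorisation (hProd : Productive K) (hHomeo : ClosedUnderHomeo K)
    (hEq : HasEqualizers K) (hP : K P tP) (he : Continuous e) :
    ∃ (L : Type) (tL : TopologicalSpace L) (m : L → P) (μ : X → L),
      IsMinimalMonoFactorisation K tL e m μ := by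
  let I := {s : Σ A : Set P, TopologicalSpace A //
    ∃ μ : X → s.1, IsMonoFactorisation K s.2 e Subtype.val μ}
  choose μA hA using fun s : I => s.2
  obtain ⟨L, tL, m, μ, hmμ, hle⟩ :=
    exists_monoFactorisation_forall_le hProd hHomeo hEq hP he (A := fun s : I => s.1.1)
      (τ := fun s : I => s.1.2) hA
  refine ⟨L, tL, m, μ, hmμ, fun M tM m' μ' hm' => ?_⟩
  obtain ⟨τ, μR, hR, k, hk, hm'k⟩ := hm'.exists_subtype hHomeo
  obtain ⟨l, hl, hkl⟩ := hle ⟨⟨_, τ⟩, μR, hR⟩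
  exact ⟨k ∘ l, hk.comp hl, by rw [← comp_assoc, hm'k, hkl]⟩

variable {L : Type} {tL : TopologicalSpace L} {m : L → P} {μ : X → L}

/-- The equalizer of `g₁` and `g₂` is a subobject of `L` through which `e` factors, hence all
of `L`. -/
lemma IsMinimalMonoFactorisation.eq_of_comp_eq (hEq : HasEqualizers K)
    (h : IsMinimalMonoFactorisation K tL e m μ) {Z : Type} [tZ : TopologicalSpace Z]
    (hZ : K Z tZ) {g₁ g₂ : L → Z} (hg₁ : Continuous g₁) (hg₂ : Continuous g₂)
    (hg : g₁ ∘ μ = g₂ ∘ μ) : g₁ = g₂ := by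
  obtain ⟨⟨hL, hm, hm_inj, hμ, hmμ⟩, hmin⟩ := h
  let E : Set L := {ξ | g₁ ξ = g₂ ξ}
  obtain ⟨k, -, hk⟩ := hmin E _ (m ∘ Subtype.val) (fun x => ⟨μ x, congrFun hg x⟩)
    ⟨hEq L Z _ _ hL hZ g₁ g₂ hg₁ hg₂, hm.comp continuous_subtype_val,
      hm_inj.comp Subtype.val_injective, hμ.subtype_mk _, hmμ⟩
  funext ξ
  have hkξ : (k ξ : L) = ξ := hm_inj (congrFun hk ξ)
  exact hkξ ▸ (k ξ).2

/-- The pullback of `j` along `t ∘ m` is a subobject of `P` through which `e` factors. -/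
lemma IsMinimalMonoFactorisation.exists_lift (hProd : Productive K) (hHomeo : ClosedUnderHomeo K)
    (hEq : HasEqualizers K) (h : IsMinimalMonoFactorisation K tL e m μ)
    {Z Q : Type} [tZ : TopologicalSpace Z] [tQ : TopologicalSpace Q] (hZ : K Z tZ)
    (hQ : K Q tQ) {j : Z → Q} (hj : Continuous j) (hj_inj : Injective j) {t : P → Q}
    (ht : Continuous t) {f : X → Z} (hf : Continuous f) (htf : t ∘ e = j ∘ f) :
    ∃ g : L → Z, Continuous g ∧ g ∘ μ = f := by
  obtain ⟨⟨hL, hm, hm_inj, hμ, hmμ⟩, hmin⟩ := h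
  let D : Set (L × Z) := {p | (t ∘ m ∘ Prod.fst) p = (j ∘ Prod.snd) p}
  have hD : K D _ := hEq _ _ _ _ (hProd.prod hHomeo hL hZ) hQ _ _
    (ht.comp (hm.comp continuous_fst)) (hj.comp continuous_snd)
  have hmD_inj : Injective fun p : D => m p.1.1 := by
    rintro ⟨⟨ξ, z⟩, hp⟩ ⟨⟨ξ', z'⟩, hp'⟩ hξ
    obtain rfl : ξ = ξ' := hm_inj hξ
    obtain rfl : z = z' := hj_inj (hp.symm.trans hp')
    rfl
  let μD : X → D := fun x =>
    ⟨(μ x, f x), (congrArg t (congrFun hmμ x)).trans (congrFun htf x)⟩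
  obtain ⟨k, hk, hkm⟩ := hmin D _ (fun p => m p.1.1) μD
    ⟨hD, hm.comp (continuous_fst.comp continuous_subtype_val), hmD_inj,
      (hμ.prodMk hf).subtype_mk _, hmμ⟩
  refine ⟨fun ξ => (k ξ).1.2, continuous_snd.comp (continuous_subtype_val.comp hk),
    funext fun x => ?_⟩
  have hkμ : k (μ x) = μD x := hmD_inj (congrFun hkm (μ x))
  simp only [comp_apply, hkμ, μD]

end MonoFactorisation

section Cogenerator

variable {S : Type} [TopologicalSpace S] {a b : S}

open Classical in
lemma continuous_ite_of_specializes (h : b ⤳ a) :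
    Continuous fun p : Prop => if p then b else a := by
  refine continuous_iff_continuousAt.2 fun p => ?_
  by_cases hp : p
  · simp only [ContinuousAt, eq_true hp, nhds_true, Filter.tendsto_pure_left, if_true]
    exact fun s hs => mem_of_mem_nhds hs
  · simp only [ContinuousAt, eq_false hp, nhds_false, Filter.tendsto_iff_forall_eventually_mem,
      Filter.eventually_top, if_false]
    intro s hs q
    split_ifs
    exacts [mem_of_mem_nhds (h hs), mem_of_mem_nhds hs]

/-- `b ⤳ a` with `a ≠ b` embeds the Sierpiński space into `S`, and a T₀ space is separated by
its maps into the Sierpiński space. -/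
lemma injective_eval_continuousMap_of_specializes {Z : Type} [TopologicalSpace Z] [T0Space Z]
    (hba : b ⤳ a) (hab : a ≠ b) : Injective fun (z : Z) (k : C(Z, S)) => k z := by
  classical
  intro z z' hzz'
  let φ : C(Prop, S) := ⟨fun p => if p then b else a, continuous_ite_of_specializes hba⟩
  have hφ : Injective φ := by
    intro p q hpq
    by_cases hp : p <;> by_cases hq : q <;> simp_all [φ, eq_comm]
  refine productOfMemOpens_injective Z (funext fun u => hφ ?_)
  exact congrFun hzz' (φ.comp ⟨(· ∈ u), continuous_Prop.2 u.isOpen⟩)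

end Cogenerator

lemma isReflective_of_specializes (hT0 : AllT0 K) (hHomeo : ClosedUnderHomeo K)
    (hProd : Productive K) (hEq : HasEqualizers K) {S : Type} [tS : TopologicalSpace S]
    (hS : K S tS) {a b : S} (hba : b ⤳ a) (hab : a ≠ b) : IsReflective K := by
  intro X tX _
  obtain ⟨L, tL, m, μ, hmin⟩ := exists_isMinimalMonoFactorisation hProd hHomeo hEq
    (hProd _ _ _ fun _ => hS) (continuous_pi fun k : C(X, S) => k.continuous)
  refine ⟨L, tL, μ, hmin.1.1, hmin.1.2.2.2.1, fun Z tZ hZ f hf => ?_⟩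
  have := hT0 Z tZ hZ
  obtain ⟨g, hg, hgμ⟩ := hmin.exists_lift hProd hHomeo hEq hZ (hProd _ _ _ fun _ => hS)
    (continuous_pi fun k : C(Z, S) => k.continuous)
    (injective_eval_continuousMap_of_specializes hba hab)
    (t := fun p k => p (k.comp ⟨f, hf⟩)) (continuous_pi fun _ => continuous_apply _) hf rfl
  exact ⟨g, ⟨hg, hgμ⟩, fun g' ⟨hg', hg'μ⟩ =>
    hmin.eq_of_comp_eq hEq hZ hg' hg (hg'μ.trans hgμ.symm)⟩

/-- a full subcategory of Top₀ closed under homeomorphisms containing a non-T₁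
space is reflective iff it is productive and has equalizers. -/
theorem statement11 (K : SpaceClass) (hT0 : AllT0 K) (hHomeo : ClosedUnderHomeo K)
    (hNotT1 : NotSubT1 K) :
    IsReflective K ↔ (Productive K ∧ HasEqualizers K) := by
  refine ⟨fun hR => ⟨hR.productive hT0 hHomeo, hR.hasEqualizers hT0 hHomeo⟩,
    fun ⟨hProd, hEq⟩ => ?_⟩
  obtain ⟨S, tS, hS, hS_not_t1⟩ := hNotT1
  obtain ⟨b, a, hba, hba_ne⟩ : ∃ b a : S, b ⤳ a ∧ b ≠ a := by
    simpa [t1Space_iff_specializes_imp_eq] using hS_not_t1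
  exact isReflective_of_specializes hT0 hHomeo hProd hEq hS hba hba_ne.symm
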